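/- Let G_r be a pendant-augmented unit disk graph on a finite set P of points in ℝ² with pendants at a subset P₀ ⊆ P. Let p, q ∈ P be distinct points with Euclidean distance at most 1 (so p and q are adjacent in G_r). Then every independent set of G_r consisting of neighbors of p that are not neighbors of q and are distinct from q has at most 5 vertices. -/

import Mathlib

/-!
Put `p` at the origin. The points of `P` in the independent set lie in the closed unit disk, at
distance `> 1` from `q` and from each other, and two vectors of norm `≤ 1` at distance `> 1` make
an angle `> π/3`. Measured from `q - p` and lifted to `[0, 2π)`, their oriented angles therefore
lie in `(π/3, 5π/3)` and are pairwise more than `π/3` apart, so there are at most four of them.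
The only dummy vertex adjacent to `p` is its own pendant.
-/

/-- The pendant-augmented unit disk graph on a finite set `P` of points in the Euclidean
plane with pendants at `P₀ ⊆ P`: the vertex set is the disjoint union of `P` (the `Sum.inl`
vertices) and one dummy vertex `Sum.inr u` for each `u ∈ P₀`; two distinct points of `P` are
adjacent iff their Euclidean distance is at most `1`; the dummy vertex of `u ∈ P₀` is adjacent
exactly to the point `u`; dummy vertices are pairwise nonadjacent. -/
def pendantUnitDiskGraph (P P₀ : Finset (EuclideanSpace ℝ (Fin 2))) :
    SimpleGraph ({p // p ∈ P} ⊕ {p // p ∈ P₀}) where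
  Adj a b :=
    match a, b with
    | Sum.inl p, Sum.inl q =>
        p ≠ q ∧ dist (p : EuclideanSpace ℝ (Fin 2)) (q : EuclideanSpace ℝ (Fin 2)) ≤ 1
    | Sum.inl p, Sum.inr u => (p : EuclideanSpace ℝ (Fin 2)) = (u : EuclideanSpace ℝ (Fin 2))
    | Sum.inr u, Sum.inl p => (p : EuclideanSpace ℝ (Fin 2)) = (u : EuclideanSpace ℝ (Fin 2))
    | Sum.inr _, Sum.inr _ => False
  symm := by
    constructor
    rintro (p | u) (q | w) h
    · exact ⟨h.1.symm, by rw [dist_comm]; exact h.2⟩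
    · exact h
    · exact h
    · exact h
  loopless := by
    constructor
    rintro (p | u) h
    · exact h.1 rfl
    · exact h

open InnerProductGeometry Real

theorem Finset.card_le_of_mem_Ico_of_le_abs_sub {ι : Type*} (s : Finset ι) (f : ι → ℝ)
    {a d : ℝ} {n : ℕ} (hd : 0 < d) (hf : ∀ i ∈ s, f i ∈ Set.Ico a (a + n * d))
    (hsep : ∀ i ∈ s, ∀ j ∈ s, i ≠ j → d ≤ |f i - f j|) : s.card ≤ n := by
  have hmaps : ∀ i ∈ s, ⌊(f i - a) / d⌋ ∈ Finset.Ico (0 : ℤ) n := by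
    intro i hi
    obtain ⟨hlo, hhi⟩ := hf i hi
    rw [Finset.mem_Ico, Int.floor_nonneg, Int.floor_lt, le_div_iff₀ hd, div_lt_iff₀ hd]
    constructor <;> push_cast <;> linarith
  have hinj : Set.InjOn (fun i => ⌊(f i - a) / d⌋) s := by
    intro i hi j hj hij
    by_contra hne
    have hlt := Int.abs_sub_lt_one_of_floor_eq_floor hij
    rw [← sub_div, sub_sub_sub_cancel_right, abs_div, abs_of_pos hd, div_lt_one hd] at hlt
    exact (hsep i hi j hj hne).not_gt hlt
  simpa using Finset.card_le_card_of_injOn _ hmaps hinj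

section Plane

variable {V : Type*} [NormedAddCommGroup V] [InnerProductSpace ℝ V]

theorem InnerProductGeometry.pi_div_three_lt_angle_of_one_lt_dist {x y : V} (hx : ‖x‖ ≤ 1)
    (hy : ‖y‖ ≤ 1) (hxy : 1 < dist x y) : π / 3 < angle x y := by
  by_contra! hle
  have hcos : 1 / 2 ≤ Real.cos (angle x y) := by
    rw [← Real.cos_pi_div_three]
    exact Real.cos_le_cos_of_nonneg_of_le_pi (angle_nonneg x y) (by linarith [pi_pos]) hle
  have hinner : ‖x‖ * ‖y‖ ≤ 2 * inner ℝ x y := by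
    rw [← cos_angle_mul_norm_mul_norm]
    nlinarith [mul_nonneg (norm_nonneg x) (norm_nonneg y)]
  have hsq : 1 < ‖x - y‖ ^ 2 := by
    rw [← dist_eq_norm]; nlinarith
  rw [norm_sub_sq_real] at hsq
  nlinarith [norm_nonneg x, norm_nonneg y, mul_nonneg (sub_nonneg.2 hx) (sub_nonneg.2 hy)]

variable [Fact (Module.finrank ℝ V = 2)]

theorem Orientation.angle_le_abs_sub_of_coe_sub_eq_oangle (o : Orientation ℝ V (Fin 2))
    {x y : V} (hx : x ≠ 0) (hy : y ≠ 0) {s t : ℝ}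
    (h : ((s - t : ℝ) : Real.Angle) = o.oangle y x) : angle x y ≤ |s - t| := by
  by_contra! hlt
  have hcos : Real.cos (s - t) = Real.cos (angle x y) := by
    rw [← Real.Angle.cos_coe, h, o.cos_oangle_eq_cos_angle hy hx, angle_comm]
  have := Real.cos_lt_cos_of_nonneg_of_le_pi (abs_nonneg _) (angle_le_pi x y) hlt
  rw [Real.cos_abs, hcos] at this
  exact this.false

theorem card_le_four_of_pi_div_three_lt_angle {s : Finset V} {v : V} (hv : v ≠ 0)
    (hs : ∀ x ∈ s, x ≠ 0) (hsv : ∀ x ∈ s, π / 3 < angle x v)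
    (hss : ∀ x ∈ s, ∀ y ∈ s, x ≠ y → π / 3 < angle x y) : s.card ≤ 4 := by
  have : FiniteDimensional ℝ V := .of_fact_finrank_eq_two
  let o : Orientation ℝ V (Fin 2) := (Module.finBasisOfFinrankEq ℝ V Fact.out).orientation
  let φ : V → ℝ := fun x => toIcoMod two_pi_pos 0 (o.oangle v x).toReal
  have hφ : ∀ x, (φ x : Real.Angle) = o.oangle v x := fun x => by
    rw [Real.Angle.coe_toIcoMod, Real.Angle.coe_toReal]
  refine Finset.card_le_of_mem_Ico_of_le_abs_sub s φ (a := π / 3) (d := π / 3) (by positivity)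
    ?_ ?_
  · intro x hx
    obtain ⟨h0, h2π⟩ := toIcoMod_mem_Ico two_pi_pos 0 (o.oangle v x).toReal
    have hlo := o.angle_le_abs_sub_of_coe_sub_eq_oangle (hs x hx) hv (s := φ x) (t := 0)
      (by rw [sub_zero, hφ])
    have hhi := o.angle_le_abs_sub_of_coe_sub_eq_oangle (hs x hx) hv (s := φ x) (t := 2 * π)
      (by rw [Real.Angle.coe_sub, Real.Angle.coe_two_pi, sub_zero, hφ])
    rw [sub_zero, abs_of_nonneg h0] at hlo
    rw [abs_of_neg (by simpa using h2π)] at hhi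
    have := hsv x hx
    constructor <;> push_cast <;> linarith
  · intro x hx y hy hxy
    refine (hss x hx y hy hxy).le.trans
      (o.angle_le_abs_sub_of_coe_sub_eq_oangle (hs x hx) (hs y hy) ?_)
    rw [Real.Angle.coe_sub, hφ, hφ, ← o.oangle_add (hs y hy) hv (hs x hx), o.oangle_rev y v]
    abel

theorem card_le_four_of_one_lt_dist {s : Finset V} {p q : V} (hpq : p ≠ q) (hq : dist q p ≤ 1)
    (hs : ∀ a ∈ s, a ≠ p ∧ dist a p ≤ 1) (hsq : ∀ a ∈ s, 1 < dist a q)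
    (hss : ∀ a ∈ s, ∀ b ∈ s, a ≠ b → 1 < dist a b) : s.card ≤ 4 := by
  have hnorm : ∀ a ∈ s, ‖a - p‖ ≤ 1 := fun a ha => (dist_eq_norm a p).symm ▸ (hs a ha).2
  rw [← Finset.card_map (Equiv.subRight p).toEmbedding]
  refine card_le_four_of_pi_div_three_lt_angle (v := q - p) (sub_ne_zero.2 hpq.symm) ?_ ?_ ?_
  all_goals simp only [Finset.forall_mem_map, Equiv.coe_toEmbedding, Equiv.subRight_apply]
  · exact fun a ha => sub_ne_zero.2 (hs a ha).1
  · intro a ha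
    refine pi_div_three_lt_angle_of_one_lt_dist (hnorm a ha) (by rwa [← dist_eq_norm]) ?_
    rw [dist_sub_right]
    exact hsq a ha
  · intro a ha b hb hab
    refine pi_div_three_lt_angle_of_one_lt_dist (hnorm a ha) (hnorm b hb) ?_
    rw [dist_sub_right]
    exact hss a ha b hb (by rintro rfl; exact hab rfl)

end Plane

section pendantUnitDiskGraph

variable {P P₀ : Finset (EuclideanSpace ℝ (Fin 2))}

theorem pendantUnitDiskGraph_adj_inl_inl {a b : {p // p ∈ P}} :
    (pendantUnitDiskGraph P P₀).Adj (.inl a) (.inl b) ↔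
      a ≠ b ∧ dist (a : EuclideanSpace ℝ (Fin 2)) b ≤ 1 :=
  Iff.rfl

theorem pendantUnitDiskGraph_adj_inl_inr {a : {p // p ∈ P}} {u : {p // p ∈ P₀}} :
    (pendantUnitDiskGraph P P₀).Adj (.inl a) (.inr u) ↔
      (a : EuclideanSpace ℝ (Fin 2)) = u :=
  Iff.rfl

theorem one_lt_dist_of_not_pendantUnitDiskGraph_adj {a b : {p // p ∈ P}} (hab : a ≠ b)
    (h : ¬ (pendantUnitDiskGraph P P₀).Adj (.inl a) (.inl b)) :
    1 < dist (a : EuclideanSpace ℝ (Fin 2)) b :=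
  lt_of_not_ge fun hle => h ⟨hab, hle⟩

end pendantUnitDiskGraph

theorem indep_neighbors_avoiding_le_five_general (P P₀ : Finset (EuclideanSpace ℝ (Fin 2)))
    (p q : {p // p ∈ P}) (hpq : p ≠ q)
    (hdist : dist (p : EuclideanSpace ℝ (Fin 2)) (q : EuclideanSpace ℝ (Fin 2)) ≤ 1)
    (W : Finset ({p // p ∈ P} ⊕ {p // p ∈ P₀}))
    (hWp : ∀ w ∈ W, (pendantUnitDiskGraph P P₀).Adj (Sum.inl p) w)
    (hWq : ∀ w ∈ W, ¬ (pendantUnitDiskGraph P P₀).Adj (Sum.inl q) w)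
    (hWne : ∀ w ∈ W, w ≠ Sum.inl q)
    (hWindep : ∀ a ∈ W, ∀ b ∈ W, ¬ (pendantUnitDiskGraph P P₀).Adj a b) :
    W.card ≤ 5 := by
  have hdummies : W.toRight.card ≤ 1 := Finset.card_le_one.2 fun u hu w hw => Subtype.ext <|
    (pendantUnitDiskGraph_adj_inl_inr.1 (hWp _ (Finset.mem_toRight.1 hu))).symm.trans
      (pendantUnitDiskGraph_adj_inl_inr.1 (hWp _ (Finset.mem_toRight.1 hw)))
  have hpoints : W.toLeft.card ≤ 4 := by
    open EuclideanSpace in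
    rw [← Finset.card_map (Function.Embedding.subtype _)]
    refine card_le_four_of_one_lt_dist (Subtype.coe_injective.ne hpq) (by rwa [dist_comm])
      ?_ ?_ ?_
    all_goals
      simp only [Finset.forall_mem_map, Finset.mem_toLeft, Function.Embedding.subtype_apply]
    · intro a ha
      obtain ⟨hpa, hpa_dist⟩ := pendantUnitDiskGraph_adj_inl_inl.1 (hWp _ ha)
      exact ⟨Subtype.coe_injective.ne hpa.symm, by rwa [dist_comm]⟩
    · intro a ha
      rw [dist_comm]
      exact one_lt_dist_of_not_pendantUnitDiskGraph_adj
        (fun h => hWne _ ha (congrArg Sum.inl h.symm)) (hWq _ ha)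
    · intro a ha b hb hab
      exact one_lt_dist_of_not_pendantUnitDiskGraph_adj (Subtype.coe_injective.ne_iff.1 hab)
        (hWindep _ ha _ hb)
  rw [← Finset.card_toLeft_add_card_toRight]
  omega

/-- In the pendant-augmented unit disk graph on `P` with pendants at `P₀ ⊆ P`,
if `p, q ∈ P` are distinct points at Euclidean distance at most `1` (hence adjacent), then
every independent set consisting of neighbors of `p` that are not neighbors of `q` and are
distinct from `q` has at most `5` vertices. -/
theorem indep_neighbors_avoiding_le_five (P P₀ : Finset (EuclideanSpace ℝ (Fin 2)))
    (hP₀ : P₀ ⊆ P) (p q : {p // p ∈ P}) (hpq : p ≠ q)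
    (hdist : dist (p : EuclideanSpace ℝ (Fin 2)) (q : EuclideanSpace ℝ (Fin 2)) ≤ 1)
    (W : Finset ({p // p ∈ P} ⊕ {p // p ∈ P₀}))
    (hWp : ∀ w ∈ W, (pendantUnitDiskGraph P P₀).Adj (Sum.inl p) w)
    (hWq : ∀ w ∈ W, ¬ (pendantUnitDiskGraph P P₀).Adj (Sum.inl q) w)
    (hWne : ∀ w ∈ W, w ≠ Sum.inl q)
    (hWindep : ∀ a ∈ W, ∀ b ∈ W, ¬ (pendantUnitDiskGraph P P₀).Adj a b) :
    W.card ≤ 5 :=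
  indep_neighbors_avoiding_le_five_general P P₀ p q hpq hdist W hWp hWq hWne hWindep
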